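/- arXiv:1102.0087 — 2 statements merged into one kernel-verified Lean document; each statement's English description precedes it below -/
import Mathlib

section
/- For every odd integer n and every k ∈ 1/2 + ℤ, the commutator of the operators J_n and φ_k on R satisfies J_n ∘ φ_k − φ_k ∘ J_n = φ_{k−n}. -/
/-!
By the canonical commutation relations,
`[φ_a φ_b, φ_k] = φ_a [φ_b, φ_k] + [φ_a, φ_k] φ_b`, so in `[J_n, φ_k]` only the two summands
`m = k - n` and `m = -k - 1` survive; for odd `n` the signs make each of them equal to
`φ_{k-n}`, which cancels the factor `1/2`. Because `n ≠ 0`, the summands of `J_n p` vanish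
outside a window fixed by the variables occurring in `p`, so every `finsum` is a finite sum.
-/

open MvPolynomial

/-- The free boson `φ_{k+1/2}` acting on `R = ℚ[z_{1/2}, z_{3/2}, …]`, where the
variable `z_{m+1/2}` is encoded as `X m`.  For `k ≥ 0` it is multiplication by
`z_{k+1/2}`; for `k < 0` it is `(-1)^{-j-1/2} ∂/∂z_{-j}` (with `j = k + 1/2`),
i.e. `(-1)^{k+1} ∂/∂z_{-k-1/2}`. -/
noncomputable def phiOp (k : ℤ) : MvPolynomial ℕ ℚ →ₗ[ℚ] MvPolynomial ℕ ℚ :=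
  if 0 ≤ k then LinearMap.mulLeft ℚ (X k.toNat)
  else ((-1 : ℚ) ^ (k + 1)) •
    (pderiv (R := ℚ) (σ := ℕ) (-k - 1).toNat).toLinearMap

/-- `J_n = (1/2) Σ_{j ∈ 1/2+ℤ} (-1)^{j+1/2} φ_j ∘ φ_{-j-n}` in integer-shifted
indices: the half-integer `j = k + 1/2` corresponds to `k : ℤ`, so
`(-1)^{j+1/2} = (-1)^{k+1}` and `φ_{-j-n}` has shifted index `-k-n-1`.
On each polynomial only finitely many summands act nonzero. -/
noncomputable def Jop (n : ℤ) (p : MvPolynomial ℕ ℚ) : MvPolynomial ℕ ℚ :=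
  (1/2 : ℚ) • ∑ᶠ k : ℤ, ((-1 : ℚ) ^ (k + 1)) • phiOp k (phiOp (-k - n - 1) p)

lemma neg_one_zpow_mul_neg_one_zpow {K : Type*} [DivisionRing K] {a b : ℤ} (h : Even (a + b)) :
    (-1 : K) ^ a * (-1 : K) ^ b = 1 := by
  rw [← zpow_add₀ (by norm_num), h.neg_one_zpow]

lemma neg_one_zpow_of_add_eq_neg_one {K : Type*} [DivisionRing K] {a b : ℤ} (h : a + b = -1) :
    (-1 : K) ^ a = -(-1 : K) ^ b := by
  rw [show a = -(b + 1) by omega, zpow_neg, zpow_add_one₀ (by norm_num)]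
  simp [← inv_zpow]

theorem MvPolynomial.pderiv_pderiv_comm {R σ : Type*} [CommSemiring R] (i j : σ)
    (f : MvPolynomial σ R) : pderiv i (pderiv j f) = pderiv j (pderiv i f) := by
  classical
  induction f using MvPolynomial.induction_on with
  | C a => simp
  | add p q hp hq => simp [hp, hq]
  | mul_X p s h =>
    have hconst (a b : σ) : pderiv a ((Pi.single b 1 : σ → MvPolynomial σ R) s) = 0 := by
      rcases eq_or_ne s b with rfl | hsb <;> simp [*]
    simp only [pderiv_mul, map_add, h, pderiv_X, hconst]
    ring

theorem MvPolynomial.exists_forall_le_pderiv_eq_zero {R : Type*} [CommSemiring R]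
    (f : MvPolynomial ℕ R) : ∃ D, ∀ i, D ≤ i → pderiv i f = 0 :=
  ⟨f.vars.sup id + 1, fun i hi => pderiv_eq_zero_of_notMem_vars fun hmem => by
    have : i ≤ f.vars.sup id := Finset.le_sup (f := id) hmem
    omega⟩

lemma phiOp_of_nonneg {k : ℤ} (h : 0 ≤ k) (p : MvPolynomial ℕ ℚ) :
    phiOp k p = X k.toNat * p := by
  rw [phiOp, if_pos h, LinearMap.mulLeft_apply]

lemma phiOp_of_neg {k : ℤ} (h : k < 0) (p : MvPolynomial ℕ ℚ) :
    phiOp k p = ((-1 : ℚ) ^ (k + 1)) • pderiv (-k - 1).toNat p := by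
  rw [phiOp, if_neg (not_le.mpr h)]; rfl

lemma phiOp_comm_of_nonneg_of_neg {a b : ℤ} (ha : 0 ≤ a) (hb : b < 0)
    (p : MvPolynomial ℕ ℚ) :
    phiOp a (phiOp b p) =
      phiOp b (phiOp a p) + (if a + b = -1 then (-1 : ℚ) ^ b else 0) • p := by
  simp only [phiOp_of_neg hb, phiOp_of_nonneg ha, pderiv_mul, mul_smul_comm, smul_add]
  split_ifs with hab
  · rw [show (-b - 1).toNat = a.toNat by omega, pderiv_X_self, one_mul,
      zpow_add_one₀ (by norm_num)]
    module
  · rw [pderiv_X_of_ne (by omega), zero_mul, smul_zero, zero_smul]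
    abel

/-- `φ_i φ_j - φ_j φ_i = (-1)^{j-1/2} δ_{i,-j}` in shifted indices
`i = a + 1/2`, `j = b + 1/2`. -/
theorem phiOp_comm (a b : ℤ) (p : MvPolynomial ℕ ℚ) :
    phiOp a (phiOp b p) =
      phiOp b (phiOp a p) + (if a + b = -1 then (-1 : ℚ) ^ b else 0) • p := by
  rcases le_or_gt 0 a with ha | ha <;> rcases le_or_gt 0 b with hb | hb
  · simp only [phiOp_of_nonneg ha, phiOp_of_nonneg hb, if_neg (show a + b ≠ -1 by omega),
      zero_smul, add_zero]
    ring
  · exact phiOp_comm_of_nonneg_of_neg ha hb p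
  · rw [phiOp_comm_of_nonneg_of_neg hb ha p, add_comm b a]
    split_ifs with hab
    · rw [neg_one_zpow_of_add_eq_neg_one (by omega : a + b = -1)]
      module
    · simp
  · simp only [phiOp_of_neg ha, phiOp_of_neg hb, if_neg (show a + b ≠ -1 by omega),
      Derivation.map_smul, zero_smul, add_zero]
    rw [pderiv_pderiv_comm, smul_comm]

lemma pderiv_phiOp_eq_zero {b : ℤ} {i : ℕ} (hib : (i : ℤ) ≠ b) {q : MvPolynomial ℕ ℚ}
    (hq : pderiv i q = 0) : pderiv i (phiOp b q) = 0 := by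
  rcases le_or_gt 0 b with hb | hb
  · rw [phiOp_of_nonneg hb, pderiv_mul, pderiv_X_of_ne (by omega), hq]
    ring
  · rw [phiOp_of_neg hb, Derivation.map_smul, pderiv_pderiv_comm, hq, map_zero, smul_zero]

section

variable {n : ℤ}

noncomputable def currentTerm (n m : ℤ) (q : MvPolynomial ℕ ℚ) : MvPolynomial ℕ ℚ :=
  (-1 : ℚ) ^ (m + 1) • phiOp m (phiOp (-m - n - 1) q)

lemma support_currentTerm_subset (hn : n ≠ 0) {D : ℕ} {q : MvPolynomial ℕ ℚ}
    (hq : ∀ i, D ≤ i → pderiv i q = 0) :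
    Function.support (currentTerm n · q) ⊆ Finset.Icc (-(D : ℤ) - 1) (D - n) := by
  intro m hm
  rw [Finset.coe_Icc, Set.mem_Icc]
  by_contra hout
  apply hm
  dsimp only
  rcases (show m < -(D : ℤ) - 1 ∨ (D : ℤ) - n < m by omega) with hlo | hhi
  · rw [currentTerm, phiOp_of_neg (by omega),
      pderiv_phiOp_eq_zero (by omega) (hq _ (by omega)), smul_zero, smul_zero]
  · rw [currentTerm, phiOp_of_neg (show -m - n - 1 < 0 by omega), hq _ (by omega), smul_zero,
      map_zero, smul_zero]

lemma Jop_eq_sum (hn : n ≠ 0) {D : ℕ} {q : MvPolynomial ℕ ℚ}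
    (hq : ∀ i, D ≤ i → pderiv i q = 0) :
    Jop n q =
      (1 / 2 : ℚ) • ∑ m ∈ Finset.Icc (-(D : ℤ) - 1) (D - n), currentTerm n m q := by
  change (1 / 2 : ℚ) • ∑ᶠ m, currentTerm n m q = _
  rw [finsum_eq_sum_of_support_subset _ (support_currentTerm_subset hn hq)]

lemma currentTerm_sub_phiOp_currentTerm (hn : Odd n) (k m : ℤ) (p : MvPolynomial ℕ ℚ) :
    currentTerm n m (phiOp k p) - phiOp k (currentTerm n m p) =
      (if m = -k - 1 then phiOp (k - n) p else 0) + (if m = k - n then phiOp (k - n) p else 0) := by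
  have h₁ : (-1 : ℚ) ^ (m + 1) •
      ((if m + k = -1 then (-1 : ℚ) ^ k else 0) • phiOp (-m - n - 1) p) =
      if m = -k - 1 then phiOp (k - n) p else 0 := by
    split_ifs with h h' h'
    · rw [smul_smul, neg_one_zpow_mul_neg_one_zpow ⟨0, by omega⟩, one_smul,
        show -m - n - 1 = k - n by omega]
    · omega
    · omega
    · simp
  have h₂ : (-1 : ℚ) ^ (m + 1) •
      ((if -m - n - 1 + k = -1 then (-1 : ℚ) ^ k else 0) • phiOp m p) =
      if m = k - n then phiOp (k - n) p else 0 := by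
    obtain ⟨t, rfl⟩ := hn
    split_ifs with h h' h'
    · rw [smul_smul, neg_one_zpow_mul_neg_one_zpow (a := m + 1) (b := k) ⟨k - t, by omega⟩,
        one_smul, h']
    · omega
    · omega
    · simp
  rw [currentTerm, currentTerm, phiOp_comm (-m - n - 1) k p, map_add, map_smul, phiOp_comm m k,
    map_smul, ← h₁, ← h₂]
  module

end

/-- For every odd integer `n` and every `k ∈ 1/2 + ℤ` (shifted index `k : ℤ`),
`J_n ∘ φ_k - φ_k ∘ J_n = φ_{k-n}`. -/
theorem current_boson_commutator (n : ℤ) (hn : Odd n) (k : ℤ)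
    (p : MvPolynomial ℕ ℚ) :
    Jop n (phiOp k p) - phiOp k (Jop n p) = phiOp (k - n) p := by
  obtain ⟨D₀, hD₀⟩ := p.exists_forall_le_pderiv_eq_zero
  obtain ⟨D, hDD₀, hDk⟩ : ∃ D : ℕ, D₀ ≤ D ∧ k.natAbs + n.natAbs < D :=
    ⟨D₀ + k.natAbs + n.natAbs + 1, by omega, by omega⟩
  have hp : ∀ i, D ≤ i → pderiv i p = 0 := fun i hi => hD₀ i (hDD₀.trans hi)
  have hkp : ∀ i, D ≤ i → pderiv i (phiOp k p) = 0 := fun i hi =>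
    pderiv_phiOp_eq_zero (by omega) (hp i hi)
  have hn₀ : n ≠ 0 := by rintro rfl; exact Int.not_odd_zero hn
  rw [Jop_eq_sum hn₀ hkp, Jop_eq_sum hn₀ hp, map_smul, map_sum, ← smul_sub,
    ← Finset.sum_sub_distrib]
  simp only [currentTerm_sub_phiOp_currentTerm hn, Finset.sum_add_distrib, Finset.sum_ite_eq',
    Finset.mem_Icc]
  rw [if_pos (by omega), if_pos (by omega), ← two_smul ℚ, smul_smul]
  norm_num
end

section
/- Let a, b ≥ 0 be integers and let μ be the hook partition (a+1, 1, 1, …, 1) with b parts equal to 1. Then, for the polynomials h_n generated by only odd power sums, the Jacobi–Trudi determinant of the hook equals the hook sum: det( (h_{μ_i − i + j})_{1≤i,j≤b+1} ) = Σ_{j=0}^{b} (−1)^j h_{a+1+j} h_{b−j}, as an identity in ℚ[t_1, t_3, t_5, …]. (This identity uses that the generating series of the h_n involves only odd-index variables; it fails for a generic family h_n.) -/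
/-!
Because `f(z) = Σ_{k odd} t_k z^k` is odd, `H(z) = exp f(z)` satisfies `H(-z) H(z) = 1`, i.e.
`Σ_i (-1)^i h_i h_{n-i} = 0` for `n > 0`: the `h_n` play the role of the elementary symmetric
functions as well. On the list expansion of `h_n` this is seen by cutting each list of odd parts
at every position: a list of length `m > 0` collects the weight `Σ_p (-1)^p / (p! (m-p)!) = 0`.

Multiplying the Jacobi–Trudi matrix on the right by the unitriangular Toeplitz matrix
`((-1)^(j'-j) h_{j'-j})` therefore turns every row but the first into a shifted unit row, so the
determinant is `(-1)^b` times the last entry of the first row, which is the hook sum.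
-/

open MvPolynomial Finset
open scoped Nat

/-- `h_n ∈ ℚ[t_1, t_3, t_5, …]` defined by
`Σ_{n≥0} h_n z^n = exp(Σ_{k≥1 odd} t_k z^k)` (the variable `X k` represents
`t_k`): expanding the exponential over ordered lists,
`h_n = Σ_{L : list of odd positive integers, Σ L = n} (1/|L|!) ∏_{k∈L} t_k`. -/
noncomputable def hOdd (n : ℕ) : MvPolynomial ℕ ℚ :=
  ∑ᶠ (L : List ℕ) (_ : L.sum = n ∧ ∀ k ∈ L, Odd k),
    ((L.length).factorial : ℚ)⁻¹ • (L.map fun k => (X k : MvPolynomial ℕ ℚ)).prod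

/-- `h_n` extended to integer indices by `h_n := 0` for `n < 0`. -/
noncomputable def hOddInt (n : ℤ) : MvPolynomial ℕ ℚ :=
  if n < 0 then 0 else hOdd n.toNat

theorem neg_one_pow_mul_neg_one_pow_sub {R : Type*} [Monoid R] [HasDistribNeg R] {j b : ℕ}
    (h : j ≤ b) : (-1 : R) ^ b * (-1) ^ (b - j) = (-1) ^ j := by
  obtain ⟨d, rfl⟩ := Nat.exists_eq_add_of_le h
  rw [Nat.add_sub_cancel_left, pow_add, mul_assoc, ← pow_add, Even.neg_one_pow ⟨d, rfl⟩, mul_one]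

theorem neg_one_pow_list_sum_of_odd {R : Type*} [Monoid R] [HasDistribNeg R] {L : List ℕ}
    (hL : ∀ k ∈ L, Odd k) : (-1 : R) ^ L.sum = (-1) ^ L.length := by
  induction L with
  | nil => rfl
  | cons k L ih =>
    rw [List.sum_cons, List.length_cons, pow_add, (hL k List.mem_cons_self).neg_one_pow,
      ih fun i hi => hL i (List.mem_cons_of_mem k hi), pow_succ']

theorem sum_range_neg_one_pow_mul_inv_factorial_mul_inv_factorial {m : ℕ} (hm : m ≠ 0) :
    ∑ p ∈ range (m + 1), (-1 : ℚ) ^ p * ((p ! : ℚ)⁻¹ * ((m - p)! : ℚ)⁻¹) = 0 := by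
  have hchoose : ∀ p ∈ range (m + 1),
      (-1 : ℚ) ^ p * ((p ! : ℚ)⁻¹ * ((m - p)! : ℚ)⁻¹) = (-1) ^ p * (m.choose p) / m ! := by
    intro p hp
    rw [Nat.cast_choose ℚ (Nat.lt_succ_iff.1 (mem_range.1 hp))]
    field_simp
  have halt : ∑ p ∈ range (m + 1), (-1 : ℚ) ^ p * (m.choose p) = 0 := by
    exact_mod_cast Int.alternating_sum_range_choose_of_ne hm
  rw [sum_congr rfl hchoose, ← sum_div, halt, zero_div]

theorem Matrix.det_eq_neg_one_pow_mul_of_tail_rows_eq_shift {R : Type*} [CommRing R] {b : ℕ}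
    (A : Matrix (Fin (b + 1)) (Fin (b + 1)) R)
    (hA : ∀ i j : Fin (b + 1), (i : ℕ) ≠ 0 → A i j = if (i : ℕ) = j + 1 then 1 else 0) :
    A.det = (-1) ^ b * A 0 (Fin.last b) := by
  have hminor : A.submatrix (Fin.succAbove 0) (Fin.last b).succAbove = 1 := by
    ext i j
    rw [Matrix.submatrix_apply, Fin.zero_succAbove, Fin.succAbove_last, hA _ _ (by simp),
      Matrix.one_apply]
    simp only [Fin.val_succ, Fin.val_castSucc, Nat.add_right_cancel_iff, Fin.val_inj]
  rw [Matrix.det_succ_column A (Fin.last b), sum_eq_single 0, hminor]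
  · rw [Matrix.det_one, mul_one, Fin.val_zero, Fin.val_last, zero_add]
  · intro i _ hi
    have hi_lt := i.isLt
    rw [hA i _ (fun h => hi (Fin.ext h)), if_neg (by simp only [Fin.val_last]; omega)]
    simp
  · simp

section JacobiTrudi

variable {R : Type*} [CommRing R]

def signedUpperToeplitz (e : ℕ → R) (n : ℕ) : Matrix (Fin n) (Fin n) R :=
  Matrix.of fun j j' => if (j : ℕ) ≤ j' then (-1) ^ ((j' : ℕ) - j) * e (j' - j) else 0

def hookJacobiTrudi (h : ℤ → R) (a b : ℕ) : Matrix (Fin (b + 1)) (Fin (b + 1)) R :=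
  Matrix.of fun i j => h ((if (i : ℕ) = 0 then (a : ℤ) + 1 else 1) - (i : ℕ) + (j : ℕ))

theorem det_signedUpperToeplitz {e : ℕ → R} (he : e 0 = 1) (n : ℕ) :
    (signedUpperToeplitz e n).det = 1 := by
  rw [Matrix.det_of_isUpperTriangular]
  · simp [signedUpperToeplitz, he]
  · intro i j hij
    simp only [signedUpperToeplitz, Matrix.of_apply, Fin.val_fin_le]
    exact if_neg (not_le.2 hij)

theorem sum_mul_signedUpperToeplitz (h : ℤ → R) (e : ℕ → R) {n : ℕ} (c : ℤ) (j' : Fin n) :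
    ∑ j : Fin n, h (c + j) * signedUpperToeplitz e n j j' =
      ∑ k ∈ range (j' + 1), (-1) ^ k * e k * h (c + j' - k) := by
  simp only [signedUpperToeplitz, Matrix.of_apply, mul_ite, mul_zero]
  rw [Fin.sum_univ_eq_sum_range (fun j => if j ≤ (j' : ℕ) then
    h (c + j) * ((-1) ^ ((j' : ℕ) - j) * e (j' - j)) else 0), ← sum_filter,
    ← sum_range_reflect]
  have hfilter : (range n).filter (· ≤ (j' : ℕ)) = range (j' + 1) := by
    ext k
    simp only [mem_filter, mem_range]
    omega
  rw [hfilter]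
  refine sum_congr rfl fun k hk => ?_
  have hk : k ≤ j' := Nat.lt_succ_iff.1 (mem_range.1 hk)
  rw [show (j' : ℕ) + 1 - 1 - k = j' - k by omega, mul_comm]
  congr 2
  push_cast [hk]
  ring

-- `hinv` says `E(-z) H(z) = 1` for the generating series `E`, `H` of `e`, `h`.
variable {h : ℤ → R} {e : ℕ → R} (hneg : ∀ n < 0, h n = 0)
  (hinv : ∀ n : ℕ, ∑ k ∈ range (n + 1), (-1) ^ k * e k * h (n - k) = if n = 0 then 1 else 0)
include hneg hinv

theorem sum_range_neg_one_pow_mul_mul_eq_ite {m : ℕ} {n : ℤ} (hnm : n ≤ m) :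
    ∑ k ∈ range (m + 1), (-1) ^ k * e k * h (n - k) = if n = 0 then 1 else 0 := by
  rcases lt_or_ge n 0 with hn | hn
  · rw [if_neg hn.ne]
    exact sum_eq_zero fun k _ => by rw [hneg _ (by omega), mul_zero]
  · lift n to ℕ using hn
    have hvanish : ∀ k ∈ range (m + 1), k ∉ range (n + 1) → (-1) ^ k * e k * h (n - k) = 0 :=
      fun k _ hk => by rw [hneg _ (by simp only [mem_range] at hk; omega), mul_zero]
    rw [← sum_subset (range_subset_range.2 (by omega)) hvanish, hinv]
    exact if_congr Nat.cast_eq_zero.symm rfl rfl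

theorem hookJacobiTrudi_mul_signedUpperToeplitz_of_ne_zero {a b : ℕ} {i : Fin (b + 1)}
    (hi : (i : ℕ) ≠ 0) (j : Fin (b + 1)) :
    (hookJacobiTrudi h a b * signedUpperToeplitz e (b + 1)) i j =
      if (i : ℕ) = j + 1 then 1 else 0 := by
  simp only [Matrix.mul_apply, hookJacobiTrudi, Matrix.of_apply, if_neg hi]
  rw [sum_mul_signedUpperToeplitz, sum_range_neg_one_pow_mul_mul_eq_ite hneg hinv (by omega)]
  exact if_congr (by omega) rfl rfl

theorem det_hookJacobiTrudi (he : e 0 = 1) (a b : ℕ) :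
    (hookJacobiTrudi h a b).det =
      ∑ j ∈ range (b + 1), (-1) ^ j * h (a + 1 + j) * e (b - j) := by
  set U := signedUpperToeplitz e (b + 1)
  have hfirst : (hookJacobiTrudi h a b * U) 0 (Fin.last b) =
      ∑ k ∈ range (b + 1), (-1) ^ k * e k * h (a + 1 + b - k) := by
    simp only [Matrix.mul_apply, hookJacobiTrudi, Matrix.of_apply, Fin.val_zero, if_true]
    rw [sum_mul_signedUpperToeplitz]
    simp
  calc (hookJacobiTrudi h a b).det = (hookJacobiTrudi h a b * U).det := by
        rw [Matrix.det_mul, det_signedUpperToeplitz he, mul_one]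
    _ = (-1) ^ b * (hookJacobiTrudi h a b * U) 0 (Fin.last b) :=
        Matrix.det_eq_neg_one_pow_mul_of_tail_rows_eq_shift _ fun _ _ hi =>
          hookJacobiTrudi_mul_signedUpperToeplitz_of_ne_zero hneg hinv hi _
    _ = ∑ j ∈ range (b + 1), (-1) ^ j * h (a + 1 + j) * e (b - j) := by
        rw [hfirst, mul_sum, ← sum_range_reflect]
        refine sum_congr rfl fun j hj => ?_
        have hj : j ≤ b := Nat.lt_succ_iff.1 (mem_range.1 hj)
        rw [show b + 1 - 1 - j = b - j by omega, ← mul_assoc, ← mul_assoc,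
          neg_one_pow_mul_neg_one_pow_sub hj]
        push_cast [hj]
        ring_nf

end JacobiTrudi

def oddCompositions (n : ℕ) : Finset (List ℕ) :=
  ((univ : Finset (Composition n)).image Composition.blocks).filter fun L => ∀ k ∈ L, Odd k

theorem mem_oddCompositions {n : ℕ} {L : List ℕ} :
    L ∈ oddCompositions n ↔ L.sum = n ∧ ∀ k ∈ L, Odd k := by
  simp only [oddCompositions, mem_filter, mem_image, mem_univ, true_and]
  constructor
  · rintro ⟨⟨c, rfl⟩, hodd⟩
    exact ⟨c.blocks_sum, hodd⟩
  · rintro ⟨hsum, hodd⟩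
    exact ⟨⟨⟨L, fun hk => (hodd _ hk).pos, hsum⟩, rfl⟩, hodd⟩

theorem append_mem_oddCompositions {m n : ℕ} {L₁ L₂ : List ℕ} (h₁ : L₁ ∈ oddCompositions m)
    (h₂ : L₂ ∈ oddCompositions n) : L₁ ++ L₂ ∈ oddCompositions (m + n) := by
  rw [mem_oddCompositions] at *
  refine ⟨by rw [List.sum_append, h₁.1, h₂.1], fun k hk => ?_⟩
  rcases List.mem_append.1 hk with hk | hk
  exacts [h₁.2 k hk, h₂.2 k hk]

theorem take_mem_oddCompositions {n : ℕ} {L : List ℕ} (hL : L ∈ oddCompositions n) (p : ℕ) :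
    L.take p ∈ oddCompositions (L.take p).sum :=
  mem_oddCompositions.2 ⟨rfl, fun k hk => (mem_oddCompositions.1 hL).2 k (List.mem_of_mem_take hk)⟩

theorem drop_mem_oddCompositions {n : ℕ} {L : List ℕ} (hL : L ∈ oddCompositions n) (p : ℕ) :
    L.drop p ∈ oddCompositions (n - (L.take p).sum) := by
  obtain ⟨hsum, hodd⟩ := mem_oddCompositions.1 hL
  refine mem_oddCompositions.2 ⟨?_, fun k hk => hodd k (List.mem_of_mem_drop hk)⟩
  rw [← hsum, ← List.sum_take_add_sum_drop L p, Nat.add_sub_cancel_left]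

theorem sum_range_sum_oddCompositions_product {M : Type*} [AddCommMonoid M] (n : ℕ)
    (g : List ℕ → List ℕ → M) :
    ∑ i ∈ range (n + 1), ∑ L ∈ oddCompositions i ×ˢ oddCompositions (n - i), g L.1 L.2 =
      ∑ L ∈ oddCompositions n, ∑ p ∈ range (L.length + 1), g (L.take p) (L.drop p) := by
  rw [sum_sigma', sum_sigma']
  refine sum_nbij' (fun x => ⟨x.2.1 ++ x.2.2, x.2.1.length⟩)
    (fun y => ⟨(y.1.take y.2).sum, (y.1.take y.2, y.1.drop y.2)⟩) ?_ ?_ ?_ ?_ ?_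
  · rintro ⟨i, L₁, L₂⟩ hx
    simp only [mem_sigma, mem_range, mem_product] at hx ⊢
    have := append_mem_oddCompositions hx.2.1 hx.2.2
    rw [Nat.add_sub_cancel' (Nat.lt_succ_iff.1 hx.1)] at this
    exact ⟨this, by simp⟩
  · rintro ⟨L, p⟩ hy
    simp only [mem_sigma, mem_range, mem_product] at hy ⊢
    refine ⟨?_, take_mem_oddCompositions hy.1 p, drop_mem_oddCompositions hy.1 p⟩
    rw [Nat.lt_succ_iff, ← (mem_oddCompositions.1 hy.1).1, ← List.sum_take_add_sum_drop L p]
    exact Nat.le_add_right _ _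
  · rintro ⟨i, L₁, L₂⟩ hx
    simp only [mem_sigma, mem_product] at hx
    simp [(mem_oddCompositions.1 hx.2.1).1]
  · rintro ⟨L, p⟩ hy
    simp only [mem_sigma, mem_range] at hy
    simp [Nat.le_of_lt_succ hy.2]
  · rintro ⟨i, L₁, L₂⟩ -
    simp

noncomputable def prodX (L : List ℕ) : MvPolynomial ℕ ℚ :=
  (L.map fun k => (X k : MvPolynomial ℕ ℚ)).prod

theorem prodX_append (L₁ L₂ : List ℕ) : prodX (L₁ ++ L₂) = prodX L₁ * prodX L₂ := by
  rw [prodX, List.map_append, List.prod_append, prodX, prodX]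

theorem hOdd_eq_sum (n : ℕ) :
    hOdd n = ∑ L ∈ oddCompositions n, ((L.length)! : ℚ)⁻¹ • prodX L := by
  rw [hOdd, ← finsum_mem_coe_finset]
  exact finsum_congr fun L => finsum_congr_Prop (by rw [mem_coe, mem_oddCompositions])
    fun _ => rfl

theorem oddCompositions_zero : oddCompositions 0 = {[]} := by
  ext L
  rw [mem_oddCompositions, mem_singleton]
  constructor
  · rintro ⟨hsum, hodd⟩
    cases L with
    | nil => rfl
    | cons k L =>
      have := (hodd k List.mem_cons_self).pos
      rw [List.sum_cons] at hsum
      omega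
  · rintro rfl
    simp

theorem hOdd_zero : hOdd 0 = 1 := by
  simp [hOdd_eq_sum, oddCompositions_zero, prodX]

theorem sum_range_neg_one_pow_smul_hOdd_mul_hOdd {n : ℕ} (hn : n ≠ 0) :
    ∑ i ∈ range (n + 1), ((-1 : ℚ) ^ i) • (hOdd i * hOdd (n - i)) = 0 := by
  let w (k l : ℕ) : ℚ := (-1) ^ k * ((k ! : ℚ)⁻¹ * (l ! : ℚ)⁻¹)
  have hexpand : ∀ i ∈ range (n + 1), ((-1 : ℚ) ^ i) • (hOdd i * hOdd (n - i)) =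
      ∑ L ∈ oddCompositions i ×ˢ oddCompositions (n - i),
        w L.1.length L.2.length • prodX (L.1 ++ L.2) := by
    intro i _
    rw [hOdd_eq_sum, hOdd_eq_sum, sum_mul_sum, smul_sum, sum_product]
    refine sum_congr rfl fun L₁ h₁ => ?_
    rw [smul_sum]
    refine sum_congr rfl fun L₂ _ => ?_
    obtain ⟨hsum, hodd⟩ := mem_oddCompositions.1 h₁
    rw [prodX_append, smul_mul_smul_comm, smul_smul, ← hsum,
      neg_one_pow_list_sum_of_odd hodd]
  rw [sum_congr rfl hexpand,
    sum_range_sum_oddCompositions_product n fun L₁ L₂ => w L₁.length L₂.length • prodX (L₁ ++ L₂)]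
  refine sum_eq_zero fun L hL => ?_
  have hlen : L.length ≠ 0 := by
    rintro hlen
    have hsum := (mem_oddCompositions.1 hL).1
    rw [List.length_eq_zero_iff.1 hlen, List.sum_nil] at hsum
    exact hn hsum.symm
  calc ∑ p ∈ range (L.length + 1),
        w (L.take p).length (L.drop p).length • prodX (L.take p ++ L.drop p)
      = (∑ p ∈ range (L.length + 1), w p (L.length - p)) • prodX L := by
        rw [sum_smul]
        refine sum_congr rfl fun p hp => ?_
        rw [List.take_append_drop, List.length_drop,
          List.length_take_of_le (Nat.lt_succ_iff.1 (mem_range.1 hp))]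
    _ = 0 := by
        rw [sum_range_neg_one_pow_mul_inv_factorial_mul_inv_factorial hlen, zero_smul]

theorem hOddInt_natCast (n : ℕ) : hOddInt n = hOdd n := by
  simp [hOddInt]

theorem hOddInt_of_neg {n : ℤ} (hn : n < 0) : hOddInt n = 0 := if_pos hn

theorem sum_range_neg_one_pow_mul_hOdd_mul_hOddInt (n : ℕ) :
    ∑ k ∈ range (n + 1), (-1) ^ k * hOdd k * hOddInt (n - k) = if n = 0 then 1 else 0 := by
  rcases eq_or_ne n 0 with rfl | hn
  · simp [hOddInt, hOdd_zero]
  rw [if_neg hn, ← sum_range_neg_one_pow_smul_hOdd_mul_hOdd hn]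
  refine sum_congr rfl fun k hk => ?_
  rw [← Nat.cast_sub (Nat.lt_succ_iff.1 (mem_range.1 hk)), hOddInt_natCast, mul_assoc,
    Algebra.smul_def, map_pow, map_neg, map_one]

/-- For the hook partition `μ = (a+1, 1, …, 1)` (with `b` parts equal to `1`)
and the polynomials `h_n` generated by only odd power sums, the
Jacobi–Trudi determinant `det((h_{μ_i - i + j})_{1≤i,j≤b+1})` equals the hook
sum `Σ_{j=0}^{b} (-1)^j h_{a+1+j} h_{b-j}`. -/
theorem jacobi_trudi_hook_odd_variables (a b : ℕ) :
    Matrix.det (Matrix.of fun i j : Fin (b + 1) =>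
        hOddInt ((if (i : ℕ) = 0 then (a : ℤ) + 1 else 1) - (i : ℕ) + (j : ℕ)))
      = ∑ j ∈ Finset.range (b + 1),
          ((-1 : ℚ) ^ j) • (hOdd (a + 1 + j) * hOdd (b - j)) := by
  refine (det_hookJacobiTrudi (fun _ => hOddInt_of_neg)
    sum_range_neg_one_pow_mul_hOdd_mul_hOddInt hOdd_zero a b).trans (sum_congr rfl fun j _ => ?_)
  rw [show (a : ℤ) + 1 + j = (a + 1 + j : ℕ) by push_cast; rfl, hOddInt_natCast, mul_assoc,
    Algebra.smul_def, map_pow, map_neg, map_one]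
end
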